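/- Let S = {x ∈ ℤ : -m ≤ x ≤ m} for a positive integer m, and let F be the set of triples (x, y, z) with x ∈ ℝ, y ∈ {0,1}^m, z ∈ {0,1} satisfying: -∑_{k=1}^m k y_k ≤ x ≤ ∑_{k=1}^m k y_k, z ≤ ∑_k y_k ≤ 1, ∑_k k y_k - x ≤ 2mz, and ∑_k k y_k + x ≤ 2m(1-z). Then the projection of F onto the x-coordinate is exactly S, and for every (x,y,z) ∈ F, x² = ∑_{k=1}^m k² y_k. -/

import Mathlib

/-!
A feasible `y` is a 0/1 vector with at most one entry equal to `1`, so every weighted sum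
`∑ g k * y k` either vanishes or equals `g j` for a single index `j`; in particular
`w := ∑ k * y k` lies in `{0, …, m}` and `∑ k² * y k = w²`. The big-M constraints force
`x = w` when `z = 0` and `x = -w` when `z = 1`. Conversely `t ∈ S` is realised by
`y = 𝟙_{|t|}` and `z = 𝟙_{t < 0}`.
-/

open Finset

section WeightedSum

variable {ι R : Type*} [Field R] [LinearOrder R] [IsStrictOrderedRing R] {s : Finset ι} {y : ι → R}

lemma sum_mul_eq_zero_or_exists_eq_apply (hy : ∀ i ∈ s, y i = 0 ∨ y i = 1)
    (hsum : ∑ i ∈ s, y i ≤ 1) :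
    (∀ g : ι → R, ∑ i ∈ s, g i * y i = 0) ∨ ∃ j ∈ s, ∀ g : ι → R, ∑ i ∈ s, g i * y i = g j := by
  by_cases hzero : ∀ i ∈ s, y i = 0
  · exact Or.inl fun g => sum_eq_zero fun i hi => by rw [hzero i hi, mul_zero]
  push Not at hzero
  obtain ⟨j, hj, hyj⟩ := hzero
  have hyj : y j = 1 := (hy j hj).resolve_left hyj
  have hnonneg : ∀ i ∈ s, 0 ≤ y i := fun i hi => by rcases hy i hi with h | h <;> simp [h]
  have hrest : ∀ i ∈ s, i ≠ j → y i = 0 := fun i hi hij =>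
    (hy i hi).resolve_right fun hyi => by
      have := add_le_sum hnonneg hj hi hij.symm
      linarith
  refine Or.inr ⟨j, hj, fun g => ?_⟩
  rw [sum_eq_single_of_mem j hj fun i hi hij => by rw [hrest i hi hij, mul_zero], hyj, mul_one]

end WeightedSum

lemma eq_or_eq_neg_of_big_M {R : Type*} [Field R] [LinearOrder R] [IsStrictOrderedRing R]
    {x w z M : R} (hz : z = 0 ∨ z = 1) (hlb : -w ≤ x) (hub : x ≤ w)
    (hpos : w - x ≤ 2 * M * z) (hneg : w + x ≤ 2 * M * (1 - z)) : x = w ∨ x = -w := by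
  rcases hz with rfl | rfl
  · exact Or.inl (by linarith)
  · exact Or.inr (by linarith)

def IsFeasible (m : ℕ) (x : ℝ) (y : ℕ → ℝ) (z : ℝ) : Prop :=
  (∀ k ∈ Icc 1 m, y k = 0 ∨ y k = 1) ∧ (z = 0 ∨ z = 1) ∧
    -(∑ k ∈ Icc 1 m, (k : ℝ) * y k) ≤ x ∧
    x ≤ ∑ k ∈ Icc 1 m, (k : ℝ) * y k ∧
    z ≤ ∑ k ∈ Icc 1 m, y k ∧
    (∑ k ∈ Icc 1 m, y k) ≤ 1 ∧
    (∑ k ∈ Icc 1 m, (k : ℝ) * y k) - x ≤ 2 * m * z ∧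
    (∑ k ∈ Icc 1 m, (k : ℝ) * y k) + x ≤ 2 * m * (1 - z)

namespace IsFeasible

variable {m : ℕ} {x z : ℝ} {y : ℕ → ℝ}

lemma exists_nat (h : IsFeasible m x y z) :
    ∃ n : ℕ, n ≤ m ∧ (x = n ∨ x = -n) ∧ ∑ k ∈ Icc 1 m, (k : ℝ) ^ 2 * y k = (n : ℝ) ^ 2 := by
  obtain ⟨hy, hz, hlb, hub, -, hsum, hpos, hneg⟩ := h
  have hx := eq_or_eq_neg_of_big_M hz hlb hub hpos hneg
  rcases sum_mul_eq_zero_or_exists_eq_apply hy hsum with hzero | ⟨j, hj, heval⟩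
  · refine ⟨0, Nat.zero_le m, ?_, ?_⟩
    · simpa [hzero] using hx
    · simpa using hzero fun k => (k : ℝ) ^ 2
  · refine ⟨j, (mem_Icc.mp hj).2, ?_, heval fun k => (k : ℝ) ^ 2⟩
    simpa [heval] using hx

lemma sq_eq (h : IsFeasible m x y z) : x ^ 2 = ∑ k ∈ Icc 1 m, (k : ℝ) ^ 2 * y k := by
  obtain ⟨n, -, hx, hsq⟩ := h.exists_nat
  rw [hsq]
  rcases hx with rfl | rfl <;> ring

lemma exists_int (h : IsFeasible m x y z) : ∃ t : ℤ, -(m : ℤ) ≤ t ∧ t ≤ (m : ℤ) ∧ x = (t : ℝ) := by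
  obtain ⟨n, hn, hx, -⟩ := h.exists_nat
  rcases hx with rfl | rfl
  · exact ⟨n, by omega, by omega, by simp⟩
  · exact ⟨-n, by omega, by omega, by simp⟩

end IsFeasible

lemma isFeasible_indicator {m : ℕ} {t : ℤ} (hlo : -(m : ℤ) ≤ t) (hhi : t ≤ m) :
    IsFeasible m t (fun k => if k = t.natAbs then 1 else 0) (if t < 0 then 1 else 0) := by
  have hsum (g : ℕ → ℝ) : ∑ k ∈ Icc 1 m, g k * (if k = t.natAbs then 1 else 0) =
      if t = 0 then 0 else g t.natAbs := by
    simp only [mul_ite, mul_one, mul_zero, sum_ite_eq', mem_Icc]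
    split_ifs with h1 h2 h2
    · simp [h2] at h1
    · rfl
    · rfl
    · omega
  have hw := hsum (↑)
  have hcount := hsum 1
  simp only [Pi.one_apply, one_mul] at hcount
  have hmr : (-(m : ℝ) ≤ t) ∧ (t : ℝ) ≤ m := ⟨by exact_mod_cast hlo, by exact_mod_cast hhi⟩
  refine ⟨fun k _ => by simp only; split_ifs <;> simp, by split_ifs <;> simp, ?_⟩
  rw [hw, hcount]
  rcases lt_trichotomy t 0 with ht | rfl | ht
  · have htr : (t.natAbs : ℝ) = -t := by simp [Nat.cast_natAbs, abs_of_neg ht]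
    simp only [ht, ht.ne, htr, if_true, if_false]
    norm_num
    constructor <;> linarith
  · simp
  · have htr : (t.natAbs : ℝ) = t := by simp [Nat.cast_natAbs, abs_of_pos ht]
    simp only [not_lt.mpr ht.le, ht.ne', htr, if_false]
    norm_num
    constructor <;> linarith

theorem stmt10_general (m : ℕ)
    (F : Set (ℝ × (ℕ → ℝ) × ℝ))
    (hF : F = {p : ℝ × (ℕ → ℝ) × ℝ |
      (∀ k ∈ Finset.Icc 1 m, p.2.1 k = 0 ∨ p.2.1 k = 1) ∧ (p.2.2 = 0 ∨ p.2.2 = 1) ∧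
      -(∑ k ∈ Finset.Icc 1 m, (k : ℝ) * p.2.1 k) ≤ p.1 ∧
      p.1 ≤ ∑ k ∈ Finset.Icc 1 m, (k : ℝ) * p.2.1 k ∧
      p.2.2 ≤ ∑ k ∈ Finset.Icc 1 m, p.2.1 k ∧
      (∑ k ∈ Finset.Icc 1 m, p.2.1 k) ≤ 1 ∧
      (∑ k ∈ Finset.Icc 1 m, (k : ℝ) * p.2.1 k) - p.1 ≤ 2 * m * p.2.2 ∧
      (∑ k ∈ Finset.Icc 1 m, (k : ℝ) * p.2.1 k) + p.1 ≤ 2 * m * (1 - p.2.2)}) :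
    (Prod.fst '' F) = {x : ℝ | ∃ t : ℤ, -(m : ℤ) ≤ t ∧ t ≤ (m : ℤ) ∧ x = (t : ℝ)} ∧
    ∀ p ∈ F, p.1 ^ 2 = ∑ k ∈ Finset.Icc 1 m, (k : ℝ) ^ 2 * p.2.1 k := by
  replace hF : F = {p | IsFeasible m p.1 p.2.1 p.2.2} := hF
  subst hF
  refine ⟨Set.ext fun x => ⟨?_, ?_⟩, fun p hp => hp.sq_eq⟩
  · rintro ⟨p, hp, rfl⟩
    exact hp.exists_int
  · rintro ⟨t, hlo, hhi, rfl⟩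
    exact ⟨(_, _, _), isFeasible_indicator hlo hhi, rfl⟩

/-- For `S = {x ∈ ℤ : -m ≤ x ≤ m}` and `F` the set of triples `(x, y, z)` satisfying the
constraints of the reformulation, the projection of `F` onto the `x`-coordinate is
exactly `S`, and every `(x, y, z) ∈ F` satisfies `x² = ∑ k² y_k`. -/
theorem stmt10 (m : ℕ) (hm : 0 < m)
    (F : Set (ℝ × (ℕ → ℝ) × ℝ))
    (hF : F = {p : ℝ × (ℕ → ℝ) × ℝ |
      (∀ k ∈ Finset.Icc 1 m, p.2.1 k = 0 ∨ p.2.1 k = 1) ∧ (p.2.2 = 0 ∨ p.2.2 = 1) ∧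
      -(∑ k ∈ Finset.Icc 1 m, (k : ℝ) * p.2.1 k) ≤ p.1 ∧
      p.1 ≤ ∑ k ∈ Finset.Icc 1 m, (k : ℝ) * p.2.1 k ∧
      p.2.2 ≤ ∑ k ∈ Finset.Icc 1 m, p.2.1 k ∧
      (∑ k ∈ Finset.Icc 1 m, p.2.1 k) ≤ 1 ∧
      (∑ k ∈ Finset.Icc 1 m, (k : ℝ) * p.2.1 k) - p.1 ≤ 2 * m * p.2.2 ∧
      (∑ k ∈ Finset.Icc 1 m, (k : ℝ) * p.2.1 k) + p.1 ≤ 2 * m * (1 - p.2.2)}) :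
    (Prod.fst '' F) = {x : ℝ | ∃ t : ℤ, -(m : ℤ) ≤ t ∧ t ≤ (m : ℤ) ∧ x = (t : ℝ)} ∧
    ∀ p ∈ F, p.1 ^ 2 = ∑ k ∈ Finset.Icc 1 m, (k : ℝ) ^ 2 * p.2.1 k :=
  stmt10_general m F hF
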